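/- Let κ > 0 and let θ be a Kuramoto solution. Suppose at a time t₀: R(t₀) ≥ R₀ > 0 and Δ(t₀) ≤ (1/4)·(D(Ω)/(κ·R₀))², and suppose the parameters γ ∈ (1/2, 1] and β ∈ (0, π/2) satisfy either R₀ ≥ γ + (1−γ)·cos β, or 2γ + (D(Ω)²/(4κ²R₀²))·(1/(1−cos β)) ≤ 1 + R₀. Then Θ(t₀) has a γ-ensemble of arclength ≤ 2β: the set A := { i ∈ {1,…,N} : there exists m ∈ ℤ with |θ_i(t₀) − φ(t₀) − 2π·m| ≤ β } satisfies |A| ≥ γ·N, where φ(t₀) is any argument of ∑_j exp(𝕚θ_j(t₀)). -/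

import Mathlib

/-- A Kuramoto solution on `[0,∞)` (modeled as a function on ℝ whose ODE holds on `Set.Ici 0`). -/
def IsKuramotoOn {N : ℕ} (κ : ℝ) (ν : Fin N → ℝ) (θ : ℝ → Fin N → ℝ) : Prop :=
  ∀ (i : Fin N), ∀ t ∈ Set.Ici (0 : ℝ), HasDerivWithinAt (fun s => θ s i)
    (ν i + κ / N * ∑ j, Real.sin (θ t j - θ t i)) (Set.Ici 0) t

/-- Order parameter `R(x) = |(1/N) ∑ⱼ exp(i xⱼ)|`. -/
noncomputable def orderParam {N : ℕ} (x : Fin N → ℝ) : ℝ :=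
  ‖(N : ℂ)⁻¹ * ∑ j, Complex.exp (Complex.I * (x j : ℂ))‖

/-- Diameter of natural frequencies `D(Ω) = max_{i,j} |νᵢ − νⱼ|`. -/
noncomputable def freqDiam {N : ℕ} (ν : Fin N → ℝ) : ℝ :=
  sSup {d : ℝ | ∃ i : Fin N, ∃ j : Fin N, d = |ν i - ν j|}


/-!
Let `cᵢ = cos(θᵢ - φ₀)`, so that `∑ cᵢ = N R ≥ N R₀`, and let `A` be the oscillators within `β` of
`φ₀` modulo `2π`; off `A` we have `cᵢ ≤ cos β < 1`. Under the first condition, bounding `cᵢ` by `1`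
on `A` and by `cos β` off `A` gives `N R₀ ≤ |A| + (N - |A|) cos β`, whence `|A| ≥ γ N`. Under the
second, with `e = 1 - cos β`, every oscillator off `A` satisfies
`sin² + e (1 - c) ≥ 2e` (the difference is `(1 + c)(cos β - c) ≥ 0`), and summing over all
oscillators bounds `2e (N - |A|)` by `N Δ + e N (1 - R₀) ≤ 2e N (1 - γ)`.
-/

open Finset Complex

lemma exists_abs_sub_two_pi_mul_le_of_cos_lt {x β : ℝ} (hβ : 0 ≤ β)
    (h : Real.cos β < Real.cos x) : ∃ m : ℤ, |x - 2 * Real.pi * m| ≤ β := by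
  obtain ⟨m, hm⟩ :=
    Real.Angle.angle_eq_iff_two_pi_dvd_sub.mp (Real.Angle.coe_toReal (x : Real.Angle)).symm
  have hy : x - 2 * Real.pi * m = (x : Real.Angle).toReal := by linarith
  refine ⟨m, le_of_not_gt fun hlt => h.not_ge ?_⟩
  have hcos : Real.cos |x - 2 * Real.pi * m| = Real.cos x := by
    rw [Real.cos_abs, hy, Real.Angle.cos_toReal, Real.Angle.cos_coe]
  rw [← hcos]
  refine (Real.cos_lt_cos_of_nonneg_of_le_pi hβ ?_ hlt).le
  rw [hy]
  exact Real.Angle.abs_toReal_le_pi _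

lemma sum_cos_sub_eq_norm_sum_exp {ι : Type*} [Fintype ι] (x : ι → ℝ) (φ : ℝ)
    (hφ : ∑ j, exp (I * x j) = (‖∑ j, exp (I * x j)‖ : ℂ) * exp (I * φ)) :
    ∑ j, Real.cos (x j - φ) = ‖∑ j, exp (I * x j)‖ := by
  have hrotate : (∑ j, exp (I * x j)) * exp (-(I * φ)) = ‖∑ j, exp (I * x j)‖ := by
    nth_rw 1 [hφ]
    rw [mul_assoc, ← exp_add, add_neg_cancel, exp_zero, mul_one]
  have hterm : ∀ j, (exp (I * x j) * exp (-(I * φ))).re = Real.cos (x j - φ) := fun j => by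
    rw [← exp_add, ← exp_ofReal_mul_I_re (x j - φ)]
    push_cast
    ring_nf
  simpa only [sum_mul, re_sum, hterm, ofReal_re] using congrArg re hrotate

lemma norm_sum_exp_eq_mul_orderParam {N : ℕ} (x : Fin N → ℝ) :
    ‖∑ j, exp (I * x j)‖ = N * orderParam x := by
  rcases Nat.eq_zero_or_pos N with rfl | hN
  · simp
  · rw [orderParam, norm_mul, norm_inv, norm_natCast, mul_inv_cancel_left₀ (by positivity)]

section Counting

variable {ι : Type*} [Fintype ι] [DecidableEq ι] {A : Finset ι} {c : ι → ℝ} {b γ r : ℝ}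

lemma mul_card_le_card_of_le_sum (hc : ∀ i, c i ≤ 1) (hA : ∀ i ∉ A, c i ≤ b) (hb : b < 1)
    (hr : Fintype.card ι * r ≤ ∑ i, c i) (hγ : γ + (1 - γ) * b ≤ r) :
    γ * Fintype.card ι ≤ #A := by
  have hsum : ∑ i, c i ≤ #A + #Aᶜ * b := by
    rw [← sum_add_sum_compl A c]
    gcongr
    · exact (sum_le_card_nsmul A c 1 fun i _ => hc i).trans_eq (by simp)
    · exact (sum_le_card_nsmul Aᶜ c b fun i hi => hA i (mem_compl.mp hi)).trans_eq (by simp)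
  have hcard : (#A + #Aᶜ : ℝ) = Fintype.card ι := by exact_mod_cast card_add_card_compl A
  have hN : (0 : ℝ) ≤ Fintype.card ι := Nat.cast_nonneg _
  nlinarith

lemma mul_card_le_card_of_sum_one_sub_sq_le {δ : ℝ} (hc₀ : ∀ i, -1 ≤ c i) (hc : ∀ i, c i ≤ 1)
    (hA : ∀ i ∉ A, c i ≤ b) (hb : b < 1) (hr : Fintype.card ι * r ≤ ∑ i, c i)
    (hδ : ∑ i, (1 - c i ^ 2) ≤ Fintype.card ι * δ) (hγ : 2 * γ + δ / (1 - b) ≤ 1 + r) :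
    γ * Fintype.card ι ≤ #A := by
  have he : 0 < 1 - b := sub_pos.mpr hb
  set f : ι → ℝ := fun i => 1 - c i ^ 2 + (1 - b) * (1 - c i)
  have hoff : ∀ i ∉ A, 2 * (1 - b) ≤ f i := fun i hi => by
    nlinarith [mul_nonneg (neg_le_iff_add_nonneg'.mp (hc₀ i)) (sub_nonneg.mpr (hA i hi))]
  have hf : ∀ i, 0 ≤ f i := fun i => by
    nlinarith [mul_nonneg (neg_le_iff_add_nonneg'.mp (hc₀ i)) (sub_nonneg.mpr (hc i)),
      mul_nonneg he.le (sub_nonneg.mpr (hc i))]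
  have hcompl : #Aᶜ * (2 * (1 - b)) ≤ ∑ i, f i := calc
    #Aᶜ * (2 * (1 - b)) = ∑ _i ∈ Aᶜ, 2 * (1 - b) := by simp
    _ ≤ ∑ i ∈ Aᶜ, f i := sum_le_sum fun i hi => hoff i (mem_compl.mp hi)
    _ ≤ ∑ i, f i := sum_le_univ_sum_of_nonneg hf
  have hsum_f : ∑ i, f i = ∑ i, (1 - c i ^ 2) + (1 - b) * (Fintype.card ι - ∑ i, c i) := by
    simp only [f, sum_add_distrib, ← mul_sum, sum_sub_distrib]
    simp
  have hδ' : δ ≤ (1 - b) * (1 + r - 2 * γ) := by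
    rw [mul_comm, ← div_le_iff₀ he]
    linarith
  have hcard : (#A + #Aᶜ : ℝ) = Fintype.card ι := by exact_mod_cast card_add_card_compl A
  have hN : (0 : ℝ) ≤ Fintype.card ι := Nat.cast_nonneg _
  nlinarith [mul_le_mul_of_nonneg_left hδ' hN, mul_le_mul_of_nonneg_left hr he.le]

end Counting

theorem majority_ensemble_emerges_general (N : ℕ) (hN : 1 ≤ N) (κ : ℝ)
    (ν : Fin N → ℝ) (θ : ℝ → Fin N → ℝ)
    (t₀ R₀ φ₀ : ℝ)
    (hR : R₀ ≤ orderParam (θ t₀))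
    (hφ₀ : (∑ j, Complex.exp (Complex.I * (θ t₀ j : ℂ)))
        = ((‖∑ j, Complex.exp (Complex.I * (θ t₀ j : ℂ))‖ : ℝ) : ℂ) *
            Complex.exp (Complex.I * (φ₀ : ℂ)))
    (hΔ : (N : ℝ)⁻¹ * ∑ k, Real.sin (θ t₀ k - φ₀) ^ 2 ≤
      1 / 4 * (freqDiam ν / (κ * R₀)) ^ 2)
    (γ β : ℝ)
    (hβ : β ∈ Set.Ioo 0 (Real.pi / 2))
    (hcond : R₀ ≥ γ + (1 - γ) * Real.cos β ∨
      2 * γ + freqDiam ν ^ 2 / (4 * κ ^ 2 * R₀ ^ 2) * (1 / (1 - Real.cos β)) ≤ 1 + R₀) :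
    γ * N ≤
      (({i : Fin N | ∃ m : ℤ, |θ t₀ i - φ₀ - 2 * Real.pi * (m : ℝ)| ≤ β}.ncard : ℝ)) := by
  classical
  set c : Fin N → ℝ := fun i => Real.cos (θ t₀ i - φ₀)
  set A := univ.filter fun i : Fin N => ∃ m : ℤ, |θ t₀ i - φ₀ - 2 * Real.pi * m| ≤ β
  have hNpos : (0 : ℝ) < N := by exact_mod_cast hN
  have hb : Real.cos β < 1 := by
    simpa using Real.cos_lt_cos_of_nonneg_of_le_pi le_rfl (by linarith [Real.pi_pos, hβ.2]) hβ.1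
  have hA : ∀ i ∉ A, c i ≤ Real.cos β := fun i hi => by
    simp only [A, mem_filter, mem_univ, true_and] at hi
    exact le_of_not_gt fun h => hi (exists_abs_sub_two_pi_mul_le_of_cos_lt hβ.1.le h)
  have hr : Fintype.card (Fin N) * R₀ ≤ ∑ i, c i := by
    rw [sum_cos_sub_eq_norm_sum_exp _ _ hφ₀, norm_sum_exp_eq_mul_orderParam, Fintype.card_fin]
    exact mul_le_mul_of_nonneg_left hR hNpos.le
  suffices γ * Fintype.card (Fin N) ≤ #A by
    simpa [A, ← Set.ncard_coe_finset] using this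
  rcases hcond with hcond | hcond
  · exact mul_card_le_card_of_le_sum (fun _ => Real.cos_le_one _) hA hb hr hcond
  · refine mul_card_le_card_of_sum_one_sub_sq_le (fun _ => Real.neg_one_le_cos _)
      (fun _ => Real.cos_le_one _) hA hb hr ?_ (by simpa only [mul_one_div] using hcond)
    simp only [← Real.sin_sq, Fintype.card_fin]
    exact (inv_mul_le_iff₀ hNpos).mp (hΔ.trans_eq (by ring))

/-- Lemma 5.2 (emergence of majority ensembles): if at time `t₀` we have
`R(t₀) ≥ R₀ > 0` and `Δ(t₀) ≤ (1/4)(D(Ω)/(κR₀))²`, and `γ ∈ (1/2,1]`,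
`β ∈ (0,π/2)` satisfy either `R₀ ≥ γ + (1−γ) cos β` or
`2γ + (D(Ω)²/(4κ²R₀²))·(1/(1−cos β)) ≤ 1 + R₀`, then the set of oscillators
within arc-distance `β` (mod 2π) of the mean phase `φ₀` has at least `γN` members. -/
theorem majority_ensemble_emerges (N : ℕ) (hN : 1 ≤ N) (κ : ℝ) (hκ : 0 < κ)
    (ν : Fin N → ℝ) (θ : ℝ → Fin N → ℝ) (hθ : IsKuramotoOn κ ν θ)
    (t₀ R₀ φ₀ : ℝ) (hR₀pos : 0 < R₀)
    (hR : R₀ ≤ orderParam (θ t₀))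
    (hφ₀ : (∑ j, Complex.exp (Complex.I * (θ t₀ j : ℂ)))
        = ((‖∑ j, Complex.exp (Complex.I * (θ t₀ j : ℂ))‖ : ℝ) : ℂ) *
            Complex.exp (Complex.I * (φ₀ : ℂ)))
    (hΔ : (N : ℝ)⁻¹ * ∑ k, Real.sin (θ t₀ k - φ₀) ^ 2 ≤
      1 / 4 * (freqDiam ν / (κ * R₀)) ^ 2)
    (γ β : ℝ) (hγ₁ : 1 / 2 < γ) (hγ₂ : γ ≤ 1)
    (hβ : β ∈ Set.Ioo 0 (Real.pi / 2))
    (hcond : R₀ ≥ γ + (1 - γ) * Real.cos β ∨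
      2 * γ + freqDiam ν ^ 2 / (4 * κ ^ 2 * R₀ ^ 2) * (1 / (1 - Real.cos β)) ≤ 1 + R₀) :
    γ * N ≤
      (({i : Fin N | ∃ m : ℤ, |θ t₀ i - φ₀ - 2 * Real.pi * (m : ℝ)| ≤ β}.ncard : ℝ)) :=
  majority_ensemble_emerges_general N hN κ ν θ t₀ R₀ φ₀ hR hφ₀ hΔ γ β hβ hcond
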